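/- For every integer N ≥ 1, the product over all rationals r in (0,1) with denominator in lowest terms at most N of Γ(r)/√(2π) equals lcm(1, 2, …, N)^(−1/2). -/

import Mathlib

/-!
Pairing `r` with `1 - r` and using the reflection formula `Γ(r) Γ(1 - r) = π / sin (π r)`, the
square of the product is `∏ (2 sin (π r))⁻¹`. Grouping the fractions by their denominator `n`,
`∏_{(k, n) = 1} 2 sin (π k / n) = |∏ (1 - ζₙ ^ k)| = Φₙ(1)`, which is `p` when `n` is a power of the
prime `p` and `1` otherwise, i.e. `exp Λ(n)`. Finally `∑_{n ≤ N} Λ(n) = log lcm(1, …, N)`.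
-/

open Real Polynomial Finset ArithmeticFunction

theorem Rat.num_natCast_div_natCast_of_coprime {k n : ℕ} (hn : n ≠ 0) (h : k.Coprime n) :
    ((k : ℚ) / n).num = k := by
  simpa using Rat.num_div_eq_of_coprime (a := k) (b := n) (by omega) (by simpa using h)

theorem Rat.den_natCast_div_natCast_of_coprime {k n : ℕ} (hn : n ≠ 0) (h : k.Coprime n) :
    ((k : ℚ) / n).den = n := by
  simpa using Rat.den_div_eq_of_coprime (a := k) (b := n) (by omega) (by simpa using h)

theorem prod_gamma_div_sqrt_two_pi_sq {s : Finset ℚ} (hs : ∀ r ∈ s, 0 < r ∧ r < 1)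
    (hsymm : ∀ r ∈ s, 1 - r ∈ s) :
    (∏ r ∈ s, Gamma r / √(2 * π)) ^ 2 = (∏ r ∈ s, 2 * sin (π * r))⁻¹ := by
  have hreflect : ∀ r ∈ s, Gamma r / √(2 * π) * (Gamma ↑(1 - r) / √(2 * π)) =
      (2 * sin (π * r))⁻¹ := by
    intro r hr
    have hsin : sin (π * r) ≠ 0 := by
      have := hs r hr
      exact (sin_pos_of_pos_of_lt_pi (mul_pos pi_pos (by exact_mod_cast this.1))
        (mul_lt_of_lt_one_right pi_pos (by exact_mod_cast this.2))).ne'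
    rw [div_mul_div_comm, Rat.cast_sub, Rat.cast_one, Gamma_mul_Gamma_one_sub,
      mul_self_sqrt (by positivity)]
    field_simp
  calc (∏ r ∈ s, Gamma r / √(2 * π)) ^ 2
      = (∏ r ∈ s, Gamma r / √(2 * π)) * ∏ r ∈ s, Gamma ↑(1 - r) / √(2 * π) := by
        rw [sq]
        congr 1
        exact prod_nbij' (1 - ·) (1 - ·) hsymm hsymm (by simp) (by simp) (by simp)
    _ = (∏ r ∈ s, 2 * sin (π * r))⁻¹ := by
        rw [← prod_mul_distrib, prod_congr rfl hreflect, prod_inv_distrib]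

theorem norm_one_sub_exp_two_pi_I_mul {x : ℝ} (h0 : 0 ≤ x) (h1 : x ≤ 1) :
    ‖1 - Complex.exp (2 * π * Complex.I * x)‖ = 2 * sin (π * x) := by
  rw [norm_sub_rev,
    show 2 * π * Complex.I * x = Complex.I * ((2 * π * x : ℝ) : ℂ) by push_cast; ring,
    Complex.norm_exp_I_mul_ofReal_sub_one, show 2 * π * x / 2 = π * x by ring,
    Real.norm_of_nonneg]
  exact mul_nonneg zero_le_two
    (sin_nonneg_of_nonneg_of_le_pi (by positivity) (by nlinarith [pi_pos]))

theorem IsPrimitiveRoot.eval_cyclotomic_eq_prod_sub_pow {R : Type*} [CommRing R] [IsDomain R]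
    {ζ : R} {n : ℕ} [NeZero n] (hζ : IsPrimitiveRoot ζ n) (x : R) :
    (cyclotomic n R).eval x = ∏ k ∈ (range n).filter (·.Coprime n), (x - ζ ^ k) := by
  classical
  have hroots : primitiveRoots n R = ((range n).filter (·.Coprime n)).image (ζ ^ ·) := by
    ext μ
    simp [mem_primitiveRoots (NeZero.pos n), hζ.isPrimitiveRoot_iff, and_assoc]
  rw [cyclotomic_eq_prod_X_sub_primitiveRoots hζ, eval_prod, hroots,
    prod_image fun a ha b hb hab => hζ.pow_inj (mem_range.mp (mem_filter.mp ha).1)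
      (mem_range.mp (mem_filter.mp hb).1) hab]
  simp

theorem prod_two_sin_eq_eval_one_cyclotomic (n : ℕ) :
    ∏ k ∈ (range n).filter (·.Coprime n), 2 * sin (π * (k / n)) = (cyclotomic n ℝ).eval 1 := by
  rcases eq_or_ne n 0 with rfl | hn
  · simp
  have : NeZero n := ⟨hn⟩
  rw [← Real.norm_of_nonneg (cyclotomic_nonneg n le_rfl), ← Complex.norm_real,
    ← cyclotomic.eval_apply_ofReal, Complex.ofReal_one,
    (Complex.isPrimitiveRoot_exp n hn).eval_cyclotomic_eq_prod_sub_pow, norm_prod]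
  refine prod_congr rfl fun k hk => ?_
  have hkn : (k : ℝ) ≤ n := by exact_mod_cast (mem_range.mp (mem_filter.mp hk).1).le
  rw [← Complex.exp_nat_mul, ← norm_one_sub_exp_two_pi_I_mul (by positivity)
    (div_le_one_of_le₀ hkn (Nat.cast_nonneg n))]
  congr 3
  push_cast
  ring

theorem eval_one_cyclotomic_eq_exp_vonMangoldt {n : ℕ} (hn : n ≠ 1) :
    (cyclotomic n ℝ).eval 1 = exp (Λ n) := by
  by_cases h : IsPrimePow n
  · obtain ⟨p, k, hp, hk, rfl⟩ := (isPrimePow_nat_iff n).mp h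
    have : Fact p.Prime := ⟨hp⟩
    obtain ⟨k, rfl⟩ := Nat.exists_eq_add_one_of_ne_zero hk.ne'
    rw [eval_one_cyclotomic_prime_pow, vonMangoldt_apply_pow (by omega),
      vonMangoldt_apply_prime hp, exp_log (by exact_mod_cast hp.pos)]
  · rw [vonMangoldt_eq_zero_iff.mpr h, exp_zero]
    refine eval_one_cyclotomic_not_prime_pow fun {p} hp k hpk => ?_
    rcases k.eq_zero_or_pos with rfl | hk
    · exact hn (by simpa using hpk.symm)
    · exact h ⟨p, k, hp.prime, hk, hpk⟩

theorem prod_eval_one_cyclotomic_eq_lcmUpto (N : ℕ) :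
    ∏ n ∈ Ioc 1 N, (cyclotomic n ℝ).eval 1 = Nat.lcmUpto N := by
  have hψ : ∑ n ∈ Ioc 1 N, Λ n = Chebyshev.psi N := by
    rw [Chebyshev.psi, Nat.floor_natCast]
    refine sum_subset (Ioc_subset_Ioc_left zero_le_one) fun n hn hn' => ?_
    obtain rfl : n = 1 := by simp only [mem_Ioc] at hn hn'; omega
    exact vonMangoldt_apply_one
  rw [prod_congr rfl fun n hn => eval_one_cyclotomic_eq_exp_vonMangoldt (mem_Ioc.mp hn).1.ne',
    ← exp_sum, hψ, Chebyshev.psi_eq_log_lcmUpto, exp_log (by exact_mod_cast Nat.lcmUpto_pos N)]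

def fareyFinset (N : ℕ) : Finset ℚ :=
  ((Ioc 1 N).sigma fun n => (range n).filter (·.Coprime n)).image fun p => (p.2 : ℚ) / p.1

theorem mem_fareyFinset {N : ℕ} {r : ℚ} : r ∈ fareyFinset N ↔ 0 < r ∧ r < 1 ∧ r.den ≤ N := by
  simp only [fareyFinset, mem_image, mem_sigma, mem_Ioc, mem_filter, mem_range, Sigma.exists]
  constructor
  · rintro ⟨n, k, ⟨⟨hn1, hnN⟩, hkn, hcop⟩, rfl⟩
    have hk : 0 < k := Nat.pos_of_ne_zero fun hk => by simp_all
    refine ⟨by positivity, (div_lt_one (by positivity)).mpr (by exact_mod_cast hkn), ?_⟩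
    rwa [Rat.den_natCast_div_natCast_of_coprime (by omega) hcop]
  · rintro ⟨h0, h1, hN⟩
    have hnum : 0 < r.num := Rat.num_pos.mpr h0
    have hlt : r.num < r.den := Rat.num_lt_denom_iff.mpr h1
    refine ⟨r.den, r.num.natAbs, ⟨⟨by omega, hN⟩, by omega, r.reduced⟩, ?_⟩
    rw [Nat.cast_natAbs, Int.cast_abs, abs_of_pos (by exact_mod_cast hnum), Rat.num_div_den]

theorem one_sub_mem_fareyFinset {N : ℕ} {r : ℚ} (hr : r ∈ fareyFinset N) :
    1 - r ∈ fareyFinset N := by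
  obtain ⟨h0, h1, hN⟩ := mem_fareyFinset.mp hr
  refine mem_fareyFinset.mpr ⟨by linarith, by linarith, ?_⟩
  simpa using (Rat.intCast_sub_den 1 r).symm ▸ hN

theorem prod_fareyFinset {M : Type*} [CommMonoid M] (N : ℕ) (g : ℚ → M) :
    ∏ r ∈ fareyFinset N, g r =
      ∏ n ∈ Ioc 1 N, ∏ k ∈ (range n).filter (·.Coprime n), g (k / n) := by
  rw [fareyFinset, prod_image, prod_sigma]
  rintro ⟨n, k⟩ hnk ⟨m, j⟩ hmj h
  simp only [coe_sigma, Set.mem_sigma_iff, coe_Ioc, Set.mem_Ioc, coe_filter, mem_range,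
    Set.mem_ofPred_eq] at hnk hmj h
  have hden := congrArg Rat.den h
  have hnum := congrArg Rat.num h
  rw [Rat.den_natCast_div_natCast_of_coprime (by omega) hnk.2.2,
    Rat.den_natCast_div_natCast_of_coprime (by omega) hmj.2.2] at hden
  subst hden
  rw [Rat.num_natCast_div_natCast_of_coprime (by omega) hnk.2.2,
    Rat.num_natCast_div_natCast_of_coprime (by omega) hmj.2.2, Nat.cast_inj] at hnum
  rw [hnum]

theorem farey_gamma_prod_general (N : ℕ) :
    ∏ᶠ r ∈ {r : ℚ | 0 < r ∧ r < 1 ∧ r.den ≤ N},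
        (Real.Gamma (r : ℝ) / Real.sqrt (2 * π)) =
      (((Finset.Icc 1 N).lcm id : ℕ) : ℝ) ^ (-(1 : ℝ) / 2) := by
  change _ = (Nat.lcmUpto N : ℝ) ^ (-(1 : ℝ) / 2)
  have hset : {r : ℚ | 0 < r ∧ r < 1 ∧ r.den ≤ N} = fareyFinset N :=
    Set.ext fun _ => mem_fareyFinset.symm
  rw [hset, finprod_mem_coe_finset]
  have hsq : (∏ r ∈ fareyFinset N, Gamma r / √(2 * π)) ^ 2 = (Nat.lcmUpto N : ℝ)⁻¹ := by
    rw [prod_gamma_div_sqrt_two_pi_sq (fun r hr => (mem_fareyFinset.mp hr).imp_right And.left)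
      fun r => one_sub_mem_fareyFinset, prod_fareyFinset]
    push_cast
    simp_rw [prod_two_sin_eq_eval_one_cyclotomic, prod_eval_one_cyclotomic_eq_lcmUpto]
  have hpos : 0 < ∏ r ∈ fareyFinset N, Gamma r / √(2 * π) := prod_pos fun r hr =>
    div_pos (Gamma_pos_of_pos (by exact_mod_cast (mem_fareyFinset.mp hr).1)) (by positivity)
  rw [← sqrt_sq hpos.le, hsq, sqrt_inv, sqrt_eq_rpow, ← rpow_neg (Nat.cast_nonneg _), neg_div]

theorem farey_gamma_prod (N : ℕ) (hN : 1 ≤ N) :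
    ∏ᶠ r ∈ {r : ℚ | 0 < r ∧ r < 1 ∧ r.den ≤ N},
        (Real.Gamma (r : ℝ) / Real.sqrt (2 * π)) =
      (((Finset.Icc 1 N).lcm id : ℕ) : ℝ) ^ (-(1 : ℝ) / 2) :=
  farey_gamma_prod_general N
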